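/- Let ψ ∈ 𝒯ₙ be such that ∂ψ/∂sᵢ|_{s=−0} ≠ ∞ for all i = 1,…,n. Then for every pair of commuting families A = (A₁,…,Aₙ) and B = (B₁,…,Bₙ) from Gen(X)ⁿ such that each Aᵢ − Bᵢ is bounded and D(Aᵢ) = D(Bᵢ), one has ‖ψ(A) − ψ(B)‖ ≤ M^{n+1} · Σᵢ₌₁ⁿ (∂ψ/∂sᵢ|_{s=−0}) ‖Aᵢ − Bᵢ‖, where M := max{M_A, M_B}. -/

import Mathlib

/-!
For one pair of generators, the Duhamel path `r ↦ T_A(t - r) T_B(r) x` runs from `T_A(t) x` to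
`T_B(t) x` with right derivative `T_A(t - r) (B - A) T_B(r) x`; the mean value inequality gives
`‖T_A(t) - T_B(t)‖ ≤ M² t ‖A - B‖`, first on the common domain and then by density.
Telescoping the products `T_A(u) = T_{A₁}(u₁) ⋯ T_{Aₙ}(uₙ)` factor by factor yields
`‖T_A(u) - T_B(u)‖ ≤ M^{n+1} ∑ᵢ ‖Aᵢ - Bᵢ‖ uᵢ`, which is `μ`-integrable because `∫ uᵢ dμ < ∞`.
Since `u ↦ T_A(u)` is only strongly measurable, `ψ(A) - ψ(B)` is built pointwise,
`x ↦ ∫ (T_A(u) - T_B(u)) x dμ`, and its norm is bounded by the integral of that majorant.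
-/

open MeasureTheory Complex ContinuousLinearMap

noncomputable section

/-- A generator of a uniformly bounded `C₀`-semigroup on a complex Banach space `X`,
bundled together with its semigroup `T`, its (maximal) domain `dom` and its action
`gen` (extended by `0` outside of the domain). -/
structure GenOp (X : Type*) [NormedAddCommGroup X] [NormedSpace ℂ X] where
  T : ℝ → X →L[ℂ] X
  T_zero : T 0 = 1
  T_add : ∀ ⦃s t : ℝ⦄, 0 ≤ s → 0 ≤ t → T (s + t) = (T s).comp (T t)
  strong_cont : ∀ x : X, ContinuousOn (fun t => T t x) (Set.Ici 0)
  bounded : ∃ M : ℝ, ∀ t : ℝ, 0 ≤ t → ‖T t‖ ≤ M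
  dom : Submodule ℂ X
  gen : X → X
  mem_dom_iff : ∀ x : X, x ∈ dom ↔ ∃ y : X,
    Filter.Tendsto (fun t : ℝ => (t : ℂ)⁻¹ • (T t x - x)) (nhdsWithin 0 (Set.Ioi 0)) (nhds y)
  gen_spec : ∀ x ∈ dom,
    Filter.Tendsto (fun t : ℝ => (t : ℂ)⁻¹ • (T t x - x)) (nhdsWithin 0 (Set.Ioi 0))
      (nhds (gen x))
  gen_zero : ∀ x, x ∉ dom → gen x = 0

variable {X : Type*} [NormedAddCommGroup X] [NormedSpace ℂ X] [CompleteSpace X]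

/-- Two semigroup generators commute if the corresponding semigroups commute. -/
def GenOp.Commutes (A B : GenOp X) : Prop :=
  ∀ ⦃s t : ℝ⦄, 0 ≤ s → 0 ≤ t → (A.T s).comp (B.T t) = (B.T t).comp (A.T s)

/-- The `n`-parameter semigroup `T_A(u) = T_{A₁}(u₁) ⋯ T_{Aₙ}(uₙ)` associated with a
family `A = (A₁, …, Aₙ)` of semigroup generators. -/
def semigrProd {n : ℕ} (A : Fin n → GenOp X) (u : Fin n → ℝ) : X →L[ℂ] X :=
  (List.ofFn fun i => (A i).T (u i)).prod

/-- The representing measure of a Bernstein function `ψ ∈ 𝒯ₙ` with `c₀ = 0`, `c₁ = 0`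
in its integral representation: a positive measure `μ` on `ℝ₊ⁿ \ {0}` such that
`e^{s·u} - 1` is `μ`-integrable for every `s ∈ (-∞,0)ⁿ`.  The associated Bernstein
function is `ψ(s) = ∫ (e^{s·u} - 1) dμ(u)`, see `bPsi`. -/
structure BernsteinMeasure (n : ℕ) where
  μ : Measure (Fin n → ℝ)
  support : μ {u | ¬ ((∀ i, 0 ≤ u i) ∧ u ≠ 0)} = 0
  integrable : ∀ s : Fin n → ℝ, (∀ i, s i < 0) →
    Integrable (fun u => Real.exp (∑ i, s i * u i) - 1) μ

/-- The Bernstein function `ψ(s) = ∫ (e^{s·u} - 1) dμ(u)` of `n` variables associated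
with a representing measure `μ`. -/
def bPsi {n : ℕ} (ρ : BernsteinMeasure n) (s : Fin n → ℝ) : ℝ :=
  ∫ u, (Real.exp (∑ i, s i * u i) - 1) ∂ρ.μ


open Filter Topology Set

namespace GenOp

variable {E : Type*} [NormedAddCommGroup E] [NormedSpace ℂ E]

lemma T_add_apply (G : GenOp E) {s t : ℝ} (hs : 0 ≤ s) (ht : 0 ≤ t) (x : E) :
    G.T (s + t) x = G.T s (G.T t x) := by
  rw [G.T_add hs ht]; rfl

lemma tendsto_slope_gen (G : GenOp E) {x : E} (hx : x ∈ G.dom) :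
    Tendsto (fun h : ℝ => h⁻¹ • (G.T h x - x)) (𝓝[>] 0) (𝓝 (G.gen x)) :=
  (G.gen_spec x hx).congr fun h => by
    rw [show ((h : ℂ))⁻¹ = ((h⁻¹ : ℝ) : ℂ) by push_cast; rfl, Complex.coe_smul]

lemma T_mem_dom (G : GenOp E) {s : ℝ} (hs : 0 ≤ s) {x : E} (hx : x ∈ G.dom) :
    G.T s x ∈ G.dom := by
  refine (G.mem_dom_iff _).2 ⟨G.T s (G.gen x), ?_⟩
  refine (((G.T s).continuous.tendsto _).comp (G.gen_spec x hx)).congr' ?_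
  filter_upwards [self_mem_nhdsWithin] with h (hh : 0 < h)
  rw [Function.comp_apply, map_smul, map_sub, ← G.T_add_apply hs hh.le, add_comm,
    G.T_add_apply hh.le hs]

/-- Strong continuity and uniform boundedness together give joint continuity. -/
lemma continuousOn_T_apply (G : GenOp E) :
    ContinuousOn (fun p : ℝ × E => G.T p.1 p.2) (Ici 0 ×ˢ univ) := by
  obtain ⟨M, hM⟩ := G.bounded
  rintro ⟨t, z⟩ ⟨ht : 0 ≤ t, -⟩
  have hsmall : Tendsto (fun p : ℝ × E => G.T p.1 (p.2 - z)) (𝓝[Ici 0 ×ˢ univ] (t, z))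
      (𝓝 0) := by
    refine squeeze_zero_norm' (a := fun p => M * ‖p.2 - z‖) ?_ ?_
    · filter_upwards [self_mem_nhdsWithin] with p hp
      exact (G.T p.1).le_of_opNorm_le (hM p.1 hp.1) _
    · have : Tendsto (fun p : ℝ × E => p.2 - z) (𝓝 (t, z)) (𝓝 0) :=
        tendsto_sub_nhds_zero_iff.2 (continuous_snd.tendsto (t, z))
      simpa using (this.norm.const_mul M).mono_left nhdsWithin_le_nhds
  have hfixed : Tendsto (fun p : ℝ × E => G.T p.1 z) (𝓝[Ici 0 ×ˢ univ] (t, z))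
      (𝓝 (G.T t z)) :=
    (G.strong_cont z t ht).tendsto.comp
      (continuous_fst.continuousWithinAt.tendsto_nhdsWithin fun _ hp => hp.1)
  have := hsmall.add hfixed
  simp only [← map_add, sub_add_cancel, zero_add] at this
  exact this

lemma hasDerivWithinAt_duhamel (A B : GenOp E) (hdom : B.dom ≤ A.dom) {x : E}
    (hx : x ∈ B.dom) {s t : ℝ} (hs : s ∈ Ico 0 t) :
    HasDerivWithinAt (fun r => A.T (t - r) (B.T r x))
      (A.T (t - s) (B.gen (B.T s x) - A.gen (B.T s x))) (Ici s) s := by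
  set y := B.T s x
  have hyB : y ∈ B.dom := B.T_mem_dom hs.1 hx
  set q : ℝ → E := fun r => (r - s)⁻¹ • (B.T (r - s) y - y) - (r - s)⁻¹ • (A.T (r - s) y - y)
  have hshift : Tendsto (fun r => r - s) (𝓝[>] s) (𝓝[>] 0) :=
    tendsto_nhdsWithin_of_tendsto_nhds_of_eventually_within _
      (by simpa using (tendsto_id.sub_const s).mono_left (nhdsWithin_le_nhds (a := s)))
      (by filter_upwards [self_mem_nhdsWithin] with r hr using mem_Ioi.2 (sub_pos.2 hr))
  have hq : Tendsto q (𝓝[>] s) (𝓝 (B.gen y - A.gen y)) :=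
    ((B.tendsto_slope_gen hyB).comp hshift).sub ((A.tendsto_slope_gen (hdom hyB)).comp hshift)
  have hlt : ∀ᶠ r in 𝓝[>] s, s < r ∧ r < t :=
    eventually_mem_nhdsWithin.and ((eventually_lt_nhds hs.2).filter_mono nhdsWithin_le_nhds)
  have hpair : Tendsto (fun r => (t - r, q r)) (𝓝[>] s)
      (𝓝[Ici 0 ×ˢ univ] (t - s, B.gen y - A.gen y)) :=
    tendsto_nhdsWithin_of_tendsto_nhds_of_eventually_within _
      ((((continuous_sub_left t).tendsto s).mono_left nhdsWithin_le_nhds).prodMk_nhds hq)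
      (by filter_upwards [hlt] with r hr using ⟨sub_nonneg.2 hr.2.le, trivial⟩)
  rw [hasDerivWithinAt_iff_tendsto_slope, Ici_sdiff_left]
  refine ((A.continuousOn_T_apply _ (mk_mem_prod (mem_Ici.2 (sub_nonneg.2 hs.2.le))
    (mem_univ _))).tendsto.comp hpair).congr' ?_
  filter_upwards [hlt] with r ⟨hsr, hrt⟩
  have hB : B.T r x = B.T (r - s) y := by
    rw [← B.T_add_apply (sub_nonneg.2 hsr.le) hs.1, sub_add_cancel]
  have hA : A.T (t - s) y = A.T (t - r) (A.T (r - s) y) := by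
    rw [← A.T_add_apply (sub_nonneg.2 hrt.le) (sub_nonneg.2 hsr.le), sub_add_sub_cancel]
  rw [slope_def_module]
  change A.T (t - r) (q r) = (r - s)⁻¹ • (A.T (t - r) (B.T r x) - A.T (t - s) y)
  rw [hB, hA, ← map_sub, ← ContinuousLinearMap.map_smul_of_tower]
  simp only [q, ← smul_sub, sub_sub_sub_cancel_right]

lemma norm_T_apply_sub_T_apply_le (A B : GenOp E) {M : ℝ} (hMA : ∀ t, 0 ≤ t → ‖A.T t‖ ≤ M)
    (hMB : ∀ t, 0 ≤ t → ‖B.T t‖ ≤ M) (hdom : B.dom ≤ A.dom) (D : E →L[ℂ] E)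
    (hD : ∀ x ∈ A.dom, D x = A.gen x - B.gen x) {t : ℝ} (ht : 0 ≤ t) {x : E}
    (hx : x ∈ B.dom) :
    ‖A.T t x - B.T t x‖ ≤ M ^ 2 * ‖D‖ * t * ‖x‖ := by
  have hcont : ContinuousOn (fun r => A.T (t - r) (B.T r x)) (Icc 0 t) :=
    A.continuousOn_T_apply.comp ((continuousOn_const.sub continuousOn_id).prodMk
      ((B.strong_cont x).mono Icc_subset_Ici_self))
      fun r hr => mk_mem_prod (mem_Ici.2 (sub_nonneg.2 hr.2)) (mem_univ _)
  have hderiv : ∀ s ∈ Ico 0 t, ‖A.T (t - s) (B.gen (B.T s x) - A.gen (B.T s x))‖ ≤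
      M * (‖D‖ * (M * ‖x‖)) := by
    intro s hs
    rw [← neg_sub (A.gen _), ← hD _ (hdom (B.T_mem_dom hs.1 hx)), map_neg, norm_neg]
    refine (A.T _).le_of_opNorm_le_of_le (hMA _ (sub_nonneg.2 hs.2.le)) ?_
    exact D.le_of_opNorm_le_of_le le_rfl ((B.T s).le_of_opNorm_le (hMB s hs.1) x)
  have := norm_image_sub_le_of_norm_deriv_right_le_segment hcont
    (fun s hs => A.hasDerivWithinAt_duhamel B hdom hx hs) hderiv t (right_mem_Icc.2 ht)
  simp only [sub_self, sub_zero, A.T_zero, B.T_zero, one_apply_eq_self] at this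
  rw [norm_sub_rev]
  exact this.trans_eq (by ring)

lemma norm_T_sub_T_le (A B : GenOp E) {M : ℝ} (hMA : ∀ t, 0 ≤ t → ‖A.T t‖ ≤ M)
    (hMB : ∀ t, 0 ≤ t → ‖B.T t‖ ≤ M) (hdom : B.dom ≤ A.dom) (hdense : Dense (B.dom : Set E))
    (D : E →L[ℂ] E) (hD : ∀ x ∈ A.dom, D x = A.gen x - B.gen x) {t : ℝ} (ht : 0 ≤ t) :
    ‖A.T t - B.T t‖ ≤ M ^ 2 * ‖D‖ * t :=
  ContinuousLinearMap.opNorm_le_bound _ (by positivity) <| hdense.induction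
    (fun _ hx => A.norm_T_apply_sub_T_apply_le B hMA hMB hdom D hD ht hx)
    (isClosed_le (by fun_prop) (by fun_prop))

end GenOp

section OperatorProducts

variable {𝕜 E : Type*} [NontriviallyNormedField 𝕜] [NormedAddCommGroup E] [NormedSpace 𝕜 E]
  {n : ℕ} {M : ℝ}

lemma norm_prod_ofFn_le {P : Fin n → E →L[𝕜] E} (hP : ∀ i, ‖P i‖ ≤ M) :
    ‖(List.ofFn P).prod‖ ≤ M ^ n := by
  induction n with
  | zero => rw [List.ofFn_zero, List.prod_nil, pow_zero]; exact ContinuousLinearMap.norm_id_le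
  | succ n ih =>
    rw [List.ofFn_succ, List.prod_cons, pow_succ']
    exact (norm_mul_le _ _).trans (mul_le_mul (hP 0) (ih fun i => hP i.succ) (norm_nonneg _)
      ((norm_nonneg _).trans (hP 0)))

lemma norm_prod_ofFn_sub_prod_ofFn_le {P Q : Fin n → E →L[𝕜] E} (hP : ∀ i, ‖P i‖ ≤ M)
    (hQ : ∀ i, ‖Q i‖ ≤ M) {e : Fin n → ℝ} (hPQ : ∀ i, ‖P i - Q i‖ ≤ M * e i) :
    ‖(List.ofFn P).prod - (List.ofFn Q).prod‖ ≤ M ^ n * ∑ i, e i := by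
  induction n with
  | zero => simp
  | succ n ih =>
    have hM : 0 ≤ M := (norm_nonneg _).trans (hP 0)
    set P' := (List.ofFn fun i => P i.succ).prod
    set Q' := (List.ofFn fun i => Q i.succ).prod
    have hsplit : P 0 * P' - Q 0 * Q' = P 0 * (P' - Q') + (P 0 - Q 0) * Q' := by noncomm_ring
    rw [List.ofFn_succ, List.ofFn_succ, List.prod_cons, List.prod_cons, hsplit,
      Fin.sum_univ_succ]
    calc ‖P 0 * (P' - Q') + (P 0 - Q 0) * Q'‖
        ≤ ‖P 0‖ * ‖P' - Q'‖ + ‖P 0 - Q 0‖ * ‖Q'‖ :=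
          (norm_add_le _ _).trans (add_le_add (norm_mul_le _ _) (norm_mul_le _ _))
      _ ≤ M * (M ^ n * ∑ i : Fin n, e i.succ) + M * e 0 * M ^ n := by
          gcongr
          · exact hP 0
          · exact ih (fun i => hP i.succ) (fun i => hQ i.succ) fun i => hPQ i.succ
          · exact (norm_nonneg _).trans (hPQ 0)
          · exact hPQ 0
          · exact norm_prod_ofFn_le fun i => hQ i.succ
      _ = M ^ (n + 1) * (e 0 + ∑ i : Fin n, e i.succ) := by ring

end OperatorProducts

section SemigroupProducts

variable {E : Type*} [NormedAddCommGroup E] [NormedSpace ℂ E] {n : ℕ}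

lemma semigrProd_succ_apply (A : Fin (n + 1) → GenOp E) (u : Fin (n + 1) → ℝ) (x : E) :
    semigrProd A u x = (A 0).T (u 0) (semigrProd (fun i => A i.succ) (fun i => u i.succ) x) := by
  rw [semigrProd, List.ofFn_succ, List.prod_cons]
  rfl

lemma continuousOn_semigrProd_apply (A : Fin n → GenOp E) (x : E) :
    ContinuousOn (fun u => semigrProd A u x) {u | ∀ i, 0 ≤ u i} := by
  induction n with
  | zero => exact (continuousOn_const (c := x)).congr fun u _ => by simp [semigrProd]
  | succ n ih =>
    simp only [semigrProd_succ_apply]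
    refine (A 0).continuousOn_T_apply.comp
      ((continuous_apply 0).continuousOn.prodMk ((ih _).comp (by fun_prop)
        fun (u : Fin (n + 1) → ℝ) (hu : ∀ i, 0 ≤ u i) i => hu i.succ))
      fun (u : Fin (n + 1) → ℝ) (hu : ∀ i, 0 ≤ u i) => mk_mem_prod (mem_Ici.2 (hu 0)) (mem_univ _)

end SemigroupProducts

lemma exists_apply_eq_integral_of_norm_le {α 𝕜 E G : Type*} [MeasurableSpace α]
    {μ : Measure α} [NontriviallyNormedField 𝕜] [NormedAddCommGroup E] [NormedSpace 𝕜 E]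
    [NormedAddCommGroup G] [NormedSpace ℝ G] [NormedSpace 𝕜 G] [SMulCommClass ℝ 𝕜 G]
    {F : α → E →L[𝕜] G} {g : α → ℝ} (hF : ∀ x, AEStronglyMeasurable (fun a => F a x) μ)
    (hg : Integrable g μ) (hFg : ∀ᵐ a ∂μ, ‖F a‖ ≤ g a) :
    ∃ S : E →L[𝕜] G, (∀ x, S x = ∫ a, F a x ∂μ) ∧ ‖S‖ ≤ ∫ a, g a ∂μ := by
  have hFx : ∀ x, ∀ᵐ a ∂μ, ‖F a x‖ ≤ g a * ‖x‖ := fun x => by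
    filter_upwards [hFg] with a ha using (F a).le_of_opNorm_le ha x
  have hint : ∀ x, Integrable (fun a => F a x) μ := fun x =>
    (hg.mul_const ‖x‖).mono' (hF x) (hFx x)
  let L : E →ₗ[𝕜] G :=
    { toFun := fun x => ∫ a, F a x ∂μ
      map_add' := fun x y => by simp only [map_add]; exact integral_add (hint x) (hint y)
      map_smul' := fun c x => by simp only [map_smul]; exact integral_smul c _ }
  have hL : ∀ x, ‖L x‖ ≤ (∫ a, g a ∂μ) * ‖x‖ := fun x => by
    rw [← integral_mul_const]
    exact norm_integral_le_of_norm_le (hg.mul_const _) (hFx x)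
  have hg0 : 0 ≤ ∫ a, g a ∂μ :=
    integral_nonneg_of_ae (by filter_upwards [hFg] with a ha using (norm_nonneg _).trans ha)
  exact ⟨L.mkContinuous _ hL, fun _ => rfl, L.mkContinuous_norm_le hg0 hL⟩

namespace BernsteinMeasure

variable {n : ℕ} (ρ : BernsteinMeasure n)

lemma ae_nonneg : ∀ᵐ u ∂ρ.μ, ∀ i, 0 ≤ u i :=
  measure_mono_null (fun u hu => by simp_all) ρ.support

lemma aestronglyMeasurable_of_continuousOn {E : Type*} [NormedAddCommGroup E]
    {f : (Fin n → ℝ) → E} (hf : ContinuousOn f {u | ∀ i, 0 ≤ u i}) :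
    AEStronglyMeasurable f ρ.μ := by
  have hclosed : IsClosed {u : Fin n → ℝ | ∀ i, 0 ≤ u i} := by
    simpa only [ofPred_forall] using
      isClosed_iInter fun i => isClosed_le continuous_const (continuous_apply i)
  rw [← Measure.restrict_eq_self_of_ae_mem ρ.ae_nonneg]
  exact hf.aestronglyMeasurable hclosed.measurableSet

end BernsteinMeasure

theorem bernstein_operator_lipschitz_general {n : ℕ} (ρ : BernsteinMeasure n)
    (hderiv : ∀ i : Fin n, Integrable (fun u => u i) ρ.μ)
    (A B : Fin n → GenOp X)
    (MA MB : ℝ)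
    (hMA : ∀ i, ∀ t : ℝ, 0 ≤ t → ‖(A i).T t‖ ≤ MA)
    (hMB : ∀ i, ∀ t : ℝ, 0 ≤ t → ‖(B i).T t‖ ≤ MB)
    (hdom : ∀ i, (A i).dom = (B i).dom)
    (hdense : ∀ i, Dense ((A i).dom : Set X))
    (D : Fin n → (X →L[ℂ] X))
    (hD : ∀ i, ∀ x ∈ (A i).dom, D i x = (A i).gen x - (B i).gen x) :
    ∃ S : X →L[ℂ] X,
      (∀ x ∈ ⨅ i, (A i).dom, S x = ∫ u, (semigrProd A u x - semigrProd B u x) ∂ρ.μ) ∧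
      ‖S‖ ≤ (max MA MB) ^ (n + 1) * ∑ i, (∫ u, u i ∂ρ.μ) * ‖D i‖ := by
  set M := max MA MB
  have hA i t (ht : 0 ≤ t) : ‖(A i).T t‖ ≤ M := (hMA i t ht).trans (le_max_left _ _)
  have hB i t (ht : 0 ≤ t) : ‖(B i).T t‖ ≤ M := (hMB i t ht).trans (le_max_right _ _)
  have hAB u (hu : ∀ i, 0 ≤ u i) :
      ‖semigrProd A u - semigrProd B u‖ ≤ M ^ (n + 1) * ∑ i, ‖D i‖ * u i := by
    refine (norm_prod_ofFn_sub_prod_ofFn_le (fun i => hA i _ (hu i)) (fun i => hB i _ (hu i))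
      (e := fun i => M * ‖D i‖ * u i) fun i => ?_).trans_eq ?_
    · exact ((A i).norm_T_sub_T_le (B i) (hA i) (hB i) (hdom i).ge (hdom i ▸ hdense i) (D i)
        (hD i) (hu i)).trans_eq (by ring)
    · simp only [Finset.mul_sum]
      exact Finset.sum_congr rfl fun i _ => by ring
  obtain ⟨S, hS, hSle⟩ := exists_apply_eq_integral_of_norm_le
    (F := fun u => semigrProd A u - semigrProd B u)
    (fun x => (ρ.aestronglyMeasurable_of_continuousOn (continuousOn_semigrProd_apply A x)).sub
      (ρ.aestronglyMeasurable_of_continuousOn (continuousOn_semigrProd_apply B x)))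
    ((integrable_finsetSum _ fun i _ => (hderiv i).const_mul ‖D i‖).const_mul (M ^ (n + 1)))
    (by filter_upwards [ρ.ae_nonneg] with u hu using hAB u hu)
  refine ⟨S, fun x _ => hS x, hSle.trans_eq ?_⟩
  rw [integral_const_mul, integral_finsetSum _ fun i _ => (hderiv i).const_mul _]
  exact congrArg _ (Finset.sum_congr rfl fun i _ => by rw [integral_const_mul, mul_comm])

/-- **Corollary 2.** Let `ψ ∈ 𝒯ₙ` with `∂ψ/∂sᵢ|_{s=-0} = ∫ uᵢ dμ(u) ≠ ∞` for all `i`.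
Then for commuting families `A`, `B` from `Gen(X)ⁿ` with `Aᵢ - Bᵢ` bounded (with bounded
extension `D i`) and `D(Aᵢ) = D(Bᵢ)`, one has
`‖ψ(A) - ψ(B)‖ ≤ M^{n+1} ∑ᵢ (∂ψ/∂sᵢ|_{s=-0}) ‖Aᵢ - Bᵢ‖`, where `M = max {M_A, M_B}`. -/
theorem bernstein_operator_lipschitz {n : ℕ} (hn : 0 < n) (ρ : BernsteinMeasure n)
    (hderiv : ∀ i : Fin n, Integrable (fun u => u i) ρ.μ)
    (A B : Fin n → GenOp X)
    (hAcomm : ∀ i j, (A i).Commutes (A j)) (hBcomm : ∀ i j, (B i).Commutes (B j))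
    (MA MB : ℝ)
    (hMA : ∀ i, ∀ t : ℝ, 0 ≤ t → ‖(A i).T t‖ ≤ MA)
    (hMB : ∀ i, ∀ t : ℝ, 0 ≤ t → ‖(B i).T t‖ ≤ MB)
    (hdom : ∀ i, (A i).dom = (B i).dom)
    (hdense : ∀ i, Dense ((A i).dom : Set X))
    (D : Fin n → (X →L[ℂ] X))
    (hD : ∀ i, ∀ x ∈ (A i).dom, D i x = (A i).gen x - (B i).gen x) :
    ∃ S : X →L[ℂ] X,
      (∀ x ∈ ⨅ i, (A i).dom, S x = ∫ u, (semigrProd A u x - semigrProd B u x) ∂ρ.μ) ∧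
      ‖S‖ ≤ (max MA MB) ^ (n + 1) * ∑ i, (∫ u, u i ∂ρ.μ) * ‖D i‖ :=
  bernstein_operator_lipschitz_general ρ hderiv A B MA MB hMA hMB hdom hdense D hD
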